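/- A λ-term M is solvable if and only if its head reduction sequence is finite (i.e., head reduction starting from M terminates in a head normal form). -/

import Mathlib

/-- Pure λ-terms with variables named by natural numbers. -/
inductive Tm : Type
  | var : ℕ → Tm
  | lam : ℕ → Tm → Tm
  | app : Tm → Tm → Tm
deriving DecidableEq

namespace Tm

/-- Free variables of a term. -/
def fv : Tm → Finset ℕ
  | var x => {x}
  | lam x t => fv t \ {x}
  | app t u => fv t ∪ fv u

/-- A variable fresh for a given finite set of variables. -/
def fresh (s : Finset ℕ) : ℕ := (s.sup id) + 1

/-- Capture-avoiding simultaneous substitution. -/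
def subst (σ : ℕ → Tm) : Tm → Tm
  | var x => σ x
  | app t u => app (subst σ t) (subst σ u)
  | lam x t =>
      let y := fresh ((fv t \ {x}).biUnion fun z => fv (σ z))
      lam y (subst (fun z => if z = x then var y else σ z) t)

/-- `M[x := N]`. -/
def subst1 (x : ℕ) (N M : Tm) : Tm :=
  subst (fun z => if z = x then N else var z) M

/-- `λx₁…xₙ. t`. -/
def lams (xs : List ℕ) (t : Tm) : Tm := xs.foldr lam t

/-- `t M₁ ⋯ Mₘ`. -/
def apps (t : Tm) (ts : List Tm) : Tm := ts.foldl app t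

/-- One-step β-reduction: contextual closure of the β-rule. -/
inductive Step : Tm → Tm → Prop
  | beta (x : ℕ) (M N : Tm) : Step (app (lam x M) N) (subst1 x N M)
  | appL {M M' : Tm} (N : Tm) : Step M M' → Step (app M N) (app M' N)
  | appR (M : Tm) {N N' : Tm} : Step N N' → Step (app M N) (app M N')
  | abs (x : ℕ) {M M' : Tm} : Step M M' → Step (lam x M) (lam x M')

/-- β-reduction: reflexive-transitive closure of one-step β-reduction. -/
def Red : Tm → Tm → Prop := Relation.ReflTransGen Step

/-- β-convertibility: the equivalence relation generated by β-reduction. -/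
def Conv : Tm → Tm → Prop := Relation.EqvGen Step

/-- `M` is solvable if `(λx⃗.M) N₁ ⋯ Nₙ` β-reduces to the identity,
where `x⃗` covers the free variables of `M`. -/
def Solvable (M : Tm) : Prop :=
  ∃ (xs : List ℕ) (Ns : List Tm) (y : ℕ),
    M.fv ⊆ xs.toFinset ∧ Red (apps (lams xs M) Ns) (lam y (var y))

/-- One-step head reduction: contraction of the head redex. -/
inductive HeadStep : Tm → Tm → Prop
  | beta (x : ℕ) (M N : Tm) (Ms : List Tm) :
      HeadStep (apps (app (lam x M) N) Ms) (apps (subst1 x N M) Ms)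
  | abs (x : ℕ) {M M' : Tm} : HeadStep M M' → HeadStep (lam x M) (lam x M')

end Tm

/-!
If `M` head-reduces to `λz⃗. v P₁ ⋯ Pₖ`, abstract the free variables of `M` together with `v`
and feed every abstraction the closed term `λ_ ⋯ λ_. I` that discards `k` arguments: whichever
copy lands in head position swallows `P₁ ⋯ Pₖ` and returns `I`.

Conversely, work with de Bruijn terms. In the intersection type system with a universal type
`ω`, typings are preserved by β-expansion, so a term reducing to `I` has type `base → base`.
Interpreting `base` as the head-normalizing terms, `→` as the function space, `∩` as intersection
and `ω` as everything gives saturated sets, so typable terms are head-normalizing. Head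
normalization passes from `(λx⃗. M) N⃗` to `M`, and back along the translation because de Bruijn
head reduction is deterministic.
-/

namespace Relation

variable {α β : Type*} {r : α → α → Prop} {s : β → β → Prop} {a b : α}

def WeaklyNormalizing (r : α → α → Prop) (a : α) : Prop :=
  ∃ b, ReflTransGen r a b ∧ ∀ c, ¬ r b c

theorem WeaklyNormalizing.of_normal (h : ∀ b, ¬ r a b) : WeaklyNormalizing r a :=
  ⟨a, .refl, h⟩

theorem WeaklyNormalizing.head (hab : r a b) (hb : WeaklyNormalizing r b) :
    WeaklyNormalizing r a :=
  let ⟨c, hbc, hc⟩ := hb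
  ⟨c, .head hab hbc, hc⟩

theorem WeaklyNormalizing.map (f : α → β) (hf : ∀ a b, r a b → s (f a) (f b))
    (hnf : ∀ a, (∀ b, ¬ r a b) → ∀ c, ¬ s (f a) c) :
    WeaklyNormalizing r a → WeaklyNormalizing s (f a)
  | ⟨b, hab, hb⟩ => ⟨f b, hab.lift f hf, hnf b hb⟩

theorem WeaklyNormalizing.of_map (hs : Relator.RightUnique s) (f : α → β)
    (hf : ∀ a b, r a b → s (f a) (f b)) (h : WeaklyNormalizing s (f a)) :
    WeaklyNormalizing r a := by
  obtain ⟨c, hac, hc⟩ := h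
  suffices ∀ x, ReflTransGen s x c → ∀ a, f a = x → WeaklyNormalizing r a from this _ hac a rfl
  intro x hx
  induction hx using ReflTransGen.head_induction_on with
  | refl =>
    rintro a rfl
    exact .of_normal fun b hab => hc _ (hf _ _ hab)
  | head hxy _ ih =>
    rintro a rfl
    by_cases hstep : ∃ b, r a b
    · obtain ⟨b, hab⟩ := hstep
      exact .head hab (ih b (hs (hf _ _ hab) hxy))
    · exact .of_normal fun b hab => hstep ⟨b, hab⟩

end Relation

open Relation

/-- De Bruijn λ-terms. -/
inductive DB : Type
  | var : ℕ → DB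
  | lam : DB → DB
  | app : DB → DB → DB

namespace DB

def upr (ρ : ℕ → ℕ) : ℕ → ℕ
  | 0 => 0
  | j + 1 => ρ j + 1

def rename (ρ : ℕ → ℕ) : DB → DB
  | var i => var (ρ i)
  | lam t => lam (rename (upr ρ) t)
  | app t u => app (rename ρ t) (rename ρ u)

def ups (σ : ℕ → DB) : ℕ → DB
  | 0 => var 0
  | j + 1 => rename Nat.succ (σ j)

def subst (σ : ℕ → DB) : DB → DB
  | var i => σ i
  | lam t => lam (subst (ups σ) t)
  | app t u => app (subst σ t) (subst σ u)

def cons (N : DB) (σ : ℕ → DB) : ℕ → DB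
  | 0 => N
  | j + 1 => σ j

def subst0 (M N : DB) : DB := subst (cons N var) M

def apps (t : DB) (ts : List DB) : DB := ts.foldl app t

theorem upr_comp (ρ π : ℕ → ℕ) : upr ρ ∘ upr π = upr (ρ ∘ π) := by
  funext i; cases i <;> rfl

theorem rename_rename (ρ π : ℕ → ℕ) (t : DB) :
    rename ρ (rename π t) = rename (ρ ∘ π) t := by
  induction t generalizing ρ π with
  | var i => rfl
  | lam t ih => simp [rename, ih, upr_comp]
  | app t u iht ihu => simp [rename, iht, ihu]

theorem ups_comp_upr (σ : ℕ → DB) (π : ℕ → ℕ) : ups σ ∘ upr π = ups (σ ∘ π) := by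
  funext i; cases i <;> rfl

theorem subst_rename (σ : ℕ → DB) (π : ℕ → ℕ) (t : DB) :
    subst σ (rename π t) = subst (σ ∘ π) t := by
  induction t generalizing σ π with
  | var i => rfl
  | lam t ih => simp [rename, subst, ih, ups_comp_upr]
  | app t u iht ihu => simp [rename, subst, iht, ihu]

theorem ups_rename (ρ : ℕ → ℕ) (σ : ℕ → DB) :
    ups (fun i => rename ρ (σ i)) = fun i => rename (upr ρ) (ups σ i) := by
  funext i
  cases i with
  | zero => rfl
  | succ j => simp only [ups, rename_rename]; rfl

theorem rename_subst (ρ : ℕ → ℕ) (σ : ℕ → DB) (t : DB) :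
    rename ρ (subst σ t) = subst (fun i => rename ρ (σ i)) t := by
  induction t generalizing ρ σ with
  | var i => rfl
  | lam t ih => simp [rename, subst, ih, ups_rename]
  | app t u iht ihu => simp [rename, subst, iht, ihu]

theorem ups_subst (σ τ : ℕ → DB) :
    ups (fun i => subst σ (τ i)) = fun i => subst (ups σ) (ups τ i) := by
  funext i
  cases i with
  | zero => rfl
  | succ j => simp only [ups, rename_subst, subst_rename]; rfl

theorem subst_subst (σ τ : ℕ → DB) (t : DB) :
    subst σ (subst τ t) = subst (fun i => subst σ (τ i)) t := by
  induction t generalizing σ τ with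
  | var i => rfl
  | lam t ih => simp [subst, ih, ups_subst]
  | app t u iht ihu => simp [subst, iht, ihu]

theorem ups_var : ups var = var := by
  funext i; cases i <;> rfl

@[simp]
theorem subst_var (t : DB) : subst var t = t := by
  induction t with
  | var i => rfl
  | lam t ih => simp [subst, ups_var, ih]
  | app t u iht ihu => simp [subst, iht, ihu]

theorem subst0_subst_ups (σ : ℕ → DB) (N t : DB) :
    subst0 (subst (ups σ) t) N = subst (cons N σ) t := by
  rw [subst0, subst_subst]
  congr 1
  funext i
  cases i with
  | zero => rfl
  | succ j => simp only [ups, subst_rename]; exact subst_var _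

theorem subst_subst0 (σ : ℕ → DB) (t N : DB) :
    subst σ (subst0 t N) = subst0 (subst (ups σ) t) (subst σ N) := by
  rw [subst0, subst0, subst_subst, subst_subst]
  congr 1
  funext i
  cases i with
  | zero => rfl
  | succ j => simp only [ups, subst_rename]; exact (subst_var _).symm

theorem apps_append (t : DB) (l l' : List DB) : apps t (l ++ l') = apps (apps t l) l' := by
  simp [apps]

inductive Step : DB → DB → Prop
  | beta (A B : DB) : Step (app (lam A) B) (subst0 A B)
  | appL {A A' : DB} (B : DB) : Step A A' → Step (app A B) (app A' B)
  | appR (A : DB) {B B' : DB} : Step B B' → Step (app A B) (app A B')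
  | abs {A A' : DB} : Step A A' → Step (lam A) (lam A')

inductive HeadStep : DB → DB → Prop
  | beta (A B : DB) : HeadStep (app (lam A) B) (subst0 A B)
  | appL {A A' : DB} (B : DB) : (∀ C, A ≠ lam C) → HeadStep A A' →
      HeadStep (app A B) (app A' B)
  | abs {A A' : DB} : HeadStep A A' → HeadStep (lam A) (lam A')

abbrev HeadNormalizing : DB → Prop := WeaklyNormalizing HeadStep

theorem HeadStep.rightUnique : Relator.RightUnique HeadStep := by
  intro X Y Y' h h'
  induction h generalizing Y' with
  | beta A B =>
    cases h' with
    | beta => rfl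
    | appL B hn h => exact absurd rfl (hn _)
  | appL B hn h ih =>
    cases h' with
    | beta => exact absurd rfl (hn _)
    | appL B hn' h' => rw [ih h']
  | abs h ih =>
    cases h' with
    | abs h' => rw [ih h']

theorem HeadStep.subst {A A' : DB} (σ : ℕ → DB) (h : HeadStep A A') :
    HeadStep (A.subst σ) (A'.subst σ) := by
  induction h generalizing σ with
  | beta A B =>
    rw [subst_subst0]
    exact .beta _ _
  | appL B hn h ih =>
    refine .appL _ ?_ (ih σ)
    cases h with
    | beta | appL => simp [DB.subst]
    | abs => exact absurd rfl (hn _)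
  | abs h ih => exact .abs (ih _)

theorem HeadStep.apps {X X' : DB} (h : HeadStep X X') (hX : ∀ C, X ≠ lam C) (l : List DB) :
    HeadStep (X.apps l) (X'.apps l) := by
  induction l generalizing X X' with
  | nil => exact h
  | cons a l ih => exact ih (.appL a hX h) (by simp)

theorem not_headStep_apps {t : DB} (ht : ∀ Y, ¬ HeadStep t Y) (ht' : ∀ C, t ≠ lam C)
    (l : List DB) (Y : DB) : ¬ HeadStep (t.apps l) Y := by
  induction l generalizing t with
  | nil => exact ht Y
  | cons a l ih =>
    refine ih (fun Y h => ?_) (by simp)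
    cases h with
    | beta => exact ht' _ rfl
    | appL _ _ h => exact ht _ h

theorem headNormalizing_lam_iff {A : DB} : HeadNormalizing (lam A) ↔ HeadNormalizing A := by
  refine ⟨.of_map HeadStep.rightUnique lam fun _ _ => .abs, .map lam (fun _ _ => .abs) ?_⟩
  rintro A hA _ ⟨⟩
  exact hA _ ‹_›

theorem HeadNormalizing.of_subst {L : DB} (σ : ℕ → DB) (h : HeadNormalizing (L.subst σ)) :
    HeadNormalizing L :=
  .of_map HeadStep.rightUnique (subst σ) (fun _ _ => .subst σ) h

theorem HeadNormalizing.of_app {X Y : DB} (h : HeadNormalizing (app X Y)) :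
    HeadNormalizing X := by
  obtain ⟨N, hN, hnf⟩ := h
  suffices ∀ Z, ReflTransGen HeadStep Z N → ∀ X Y, Z = app X Y → HeadNormalizing X from
    this _ hN X Y rfl
  intro Z hZ
  induction hZ using ReflTransGen.head_induction_on with
  | refl =>
    rintro X Y rfl
    refine .of_normal fun X' hX => ?_
    by_cases hlam : ∃ C, X = lam C
    · obtain ⟨C, rfl⟩ := hlam
      exact hnf _ (.beta C Y)
    · exact hnf _ (.appL Y (fun C hC => hlam ⟨C, hC⟩) hX)
  | head hstep hrest ih =>
    rintro X Y rfl
    cases hstep with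
    | beta A B =>
      exact headNormalizing_lam_iff.2 (HeadNormalizing.of_subst _ ⟨N, hrest, hnf⟩)
    | appL B _ hX => exact .head hX (ih _ _ rfl)

theorem HeadNormalizing.of_apps {X : DB} {l : List DB} (h : HeadNormalizing (X.apps l)) :
    HeadNormalizing X := by
  induction l generalizing X with
  | nil => exact h
  | cons a l ih => exact (ih h).of_app

inductive Ty : Type
  | base : Ty
  | arr : Ty → Ty → Ty
  | inter : Ty → Ty → Ty
  | omega : Ty

open Ty

abbrev Ctx := ℕ → Ty

def Ctx.cons (A : Ty) (Γ : Ctx) : Ctx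
  | 0 => A
  | j + 1 => Γ j

def Ctx.inter (Γ Δ : Ctx) : Ctx := fun j => Ty.inter (Γ j) (Δ j)

inductive HasType : Ctx → DB → Ty → Prop
  | var (Γ : Ctx) (i : ℕ) : HasType Γ (var i) (Γ i)
  | lam {Γ : Ctx} {M : DB} {A B : Ty} : HasType (Γ.cons A) M B → HasType Γ (lam M) (arr A B)
  | app {Γ : Ctx} {M N : DB} {A B : Ty} :
      HasType Γ M (arr A B) → HasType Γ N A → HasType Γ (app M N) B
  | inter {Γ : Ctx} {M : DB} {A B : Ty} :
      HasType Γ M A → HasType Γ M B → HasType Γ M (inter A B)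
  | fst {Γ : Ctx} {M : DB} {A B : Ty} : HasType Γ M (inter A B) → HasType Γ M A
  | snd {Γ : Ctx} {M : DB} {A B : Ty} : HasType Γ M (inter A B) → HasType Γ M B
  | omega (Γ : Ctx) (M : DB) : HasType Γ M omega

namespace HasType

theorem var_congr {Γ Γ' : Ctx} {i j : ℕ} {A : Ty} (h : HasType Γ (DB.var i) A)
    (hΓ : Γ' j = Γ i) : HasType Γ' (DB.var j) A := by
  generalize ht : DB.var i = t at h
  induction h generalizing Γ' with
  | var => cases ht; exact hΓ ▸ .var Γ' j
  | lam | app => cases ht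
  | inter _ _ ih ih' => exact .inter (ih hΓ ht) (ih' hΓ ht)
  | fst _ ih => exact .fst (ih hΓ ht)
  | snd _ ih => exact .snd (ih hΓ ht)
  | omega => exact .omega _ _

theorem mono {Γ Δ : Ctx} {M : DB} {A : Ty} (h : HasType Δ M A)
    (hΔ : ∀ i, HasType Γ (DB.var i) (Δ i)) : HasType Γ M A := by
  induction h generalizing Γ with
  | var => exact hΔ _
  | lam _ ih =>
    refine .lam (ih fun i => ?_)
    cases i with
    | zero => exact .var _ 0
    | succ j => exact (hΔ j).var_congr rfl
  | app _ _ ih ih' => exact .app (ih hΔ) (ih' hΔ)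
  | inter _ _ ih ih' => exact .inter (ih hΔ) (ih' hΔ)
  | fst _ ih => exact .fst (ih hΔ)
  | snd _ ih => exact .snd (ih hΔ)
  | omega => exact .omega _ _

theorem of_rename {Δ : Ctx} {t : DB} {A : Ty} (h : HasType Δ t A) (ρ : ℕ → ℕ) (M : DB)
    (ht : t = M.rename ρ) : HasType (Δ ∘ ρ) M A := by
  induction h generalizing ρ M with
  | var =>
    cases M <;> simp only [rename, reduceCtorEq, var.injEq] at ht
    subst ht
    exact .var _ _
  | @lam Γ t A B _ ih =>
    cases M <;> simp only [rename, reduceCtorEq, lam.injEq] at ht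
    refine .lam ((ih _ _ ht).mono fun i => ?_)
    cases i <;> exact .var _ _
  | app _ _ ih ih' =>
    cases M <;> simp only [rename, reduceCtorEq, app.injEq] at ht
    exact .app (ih ρ _ ht.1) (ih' ρ _ ht.2)
  | inter _ _ ih ih' => exact .inter (ih ρ M ht) (ih' ρ M ht)
  | fst _ ih => exact .fst (ih ρ M ht)
  | snd _ ih => exact .snd (ih ρ M ht)
  | omega => exact .omega _ _

theorem inter_left {Γ : Ctx} {M : DB} {A : Ty} (h : HasType Γ M A) (Δ : Ctx) :
    HasType (Γ.inter Δ) M A :=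
  h.mono fun i => (var _ i).fst

theorem inter_right {Δ : Ctx} {M : DB} {A : Ty} (h : HasType Δ M A) (Γ : Ctx) :
    HasType (Γ.inter Δ) M A :=
  h.mono fun i => (var _ i).snd

theorem of_subst_var {Γ : Ctx} {σ : ℕ → DB} {i : ℕ} {A : Ty} (h : HasType Γ (σ i) A) :
    ∃ Δ : Ctx, (∀ j, HasType Γ (σ j) (Δ j)) ∧ HasType Δ (DB.var i) A := by
  refine ⟨fun j => if j = i then A else Ty.omega, fun j => ?_,
    by simpa using var (fun j => if j = i then A else Ty.omega) i⟩
  by_cases hj : j = i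
  · simpa [hj] using h
  · simpa [hj] using omega Γ (σ j)

theorem of_subst_ups {Γ Δ : Ctx} {σ : ℕ → DB} {M : DB} {S B : Ty}
    (hσ : ∀ j, HasType (Γ.cons S) (ups σ j) (Δ j)) (hM : HasType Δ M B) :
    ∃ Δ' : Ctx, (∀ j, HasType Γ (σ j) (Δ' j)) ∧ HasType Δ' (DB.lam M) (arr S B) := by
  refine ⟨Δ ∘ Nat.succ, fun j => (hσ (j + 1)).of_rename Nat.succ _ rfl, .lam (hM.mono ?_)⟩
  rintro (_ | j)
  · exact (hσ 0).var_congr rfl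
  · exact .var _ _

/-- Anti-substitution; the intersection types are what allow the types of the occurrences of a
variable to be collected into one. -/
theorem of_subst {Γ : Ctx} {t : DB} {A : Ty} (h : HasType Γ t A) (σ : ℕ → DB) (M : DB)
    (ht : t = M.subst σ) : ∃ Δ : Ctx, (∀ j, HasType Γ (σ j) (Δ j)) ∧ HasType Δ M A := by
  induction h generalizing σ M with
  | var =>
    cases M <;> simp only [subst, reduceCtorEq] at ht
    exact of_subst_var (ht ▸ .var _ _)
  | lam h ih =>
    cases M with
    | var i => exact of_subst_var (by simpa [ht, subst] using h.lam)
    | app => simp [subst] at ht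
    | lam M =>
      obtain ⟨Δ, hσ, hM⟩ := ih _ _ (by simpa [subst] using ht)
      exact of_subst_ups hσ hM
  | app h h' ih ih' =>
    cases M with
    | var i => exact of_subst_var (by simpa [ht, subst] using h.app h')
    | lam => simp [subst] at ht
    | app M N =>
      simp only [subst, app.injEq] at ht
      obtain ⟨Δ, hσ, hM⟩ := ih σ M ht.1
      obtain ⟨Δ', hσ', hN⟩ := ih' σ N ht.2
      exact ⟨Δ.inter Δ', fun j => (hσ j).inter (hσ' j), .app (hM.inter_left Δ') (hN.inter_right Δ)⟩
  | inter _ _ ih ih' =>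
    obtain ⟨Δ, hσ, hM⟩ := ih σ M ht
    obtain ⟨Δ', hσ', hM'⟩ := ih' σ M ht
    exact ⟨Δ.inter Δ', fun j => (hσ j).inter (hσ' j), .inter (hM.inter_left Δ') (hM'.inter_right Δ)⟩
  | fst _ ih =>
    obtain ⟨Δ, hσ, hM⟩ := ih σ M ht
    exact ⟨Δ, hσ, hM.fst⟩
  | snd _ ih =>
    obtain ⟨Δ, hσ, hM⟩ := ih σ M ht
    exact ⟨Δ, hσ, hM.snd⟩
  | omega => exact ⟨fun _ => Ty.omega, fun _ => .omega _ _, .omega _ _⟩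

theorem of_subst0 {Γ : Ctx} {A : Ty} {M N : DB} (h : HasType Γ (subst0 M N) A) :
    ∃ C, HasType Γ N C ∧ HasType (Γ.cons C) M A := by
  obtain ⟨Δ, hσ, hM⟩ := h.of_subst _ M rfl
  refine ⟨Δ 0, hσ 0, hM.mono ?_⟩
  rintro (_ | j)
  · exact .var _ 0
  · exact (hσ (j + 1)).var_congr rfl

end HasType

def typings (X : DB) : Set (Ctx × Ty) := {p | HasType p.1 X p.2}

theorem typings_app_subset {A A' B B' : DB} (hA : typings A' ⊆ typings A)
    (hB : typings B' ⊆ typings B) : typings (app A' B') ⊆ typings (app A B) := by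
  rintro ⟨Γ, T⟩ h
  change HasType Γ _ T at h ⊢
  generalize ht : app A' B' = t at h
  induction h with
  | var | lam => cases ht
  | app h h' => cases ht; exact .app (@hA (_, _) h) (@hB (_, _) h')
  | inter _ _ ih ih' => exact .inter (ih ht) (ih' ht)
  | fst _ ih => exact .fst (ih ht)
  | snd _ ih => exact .snd (ih ht)
  | omega => exact .omega _ _

theorem typings_lam_subset {A A' : DB} (hA : typings A' ⊆ typings A) :
    typings (lam A') ⊆ typings (lam A) := by
  rintro ⟨Γ, T⟩ h
  change HasType Γ _ T at h ⊢
  generalize ht : lam A' = t at h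
  induction h with
  | var | app => cases ht
  | lam h => cases ht; exact .lam (@hA (_, _) h)
  | inter _ _ ih ih' => exact .inter (ih ht) (ih' ht)
  | fst _ ih => exact .fst (ih ht)
  | snd _ ih => exact .snd (ih ht)
  | omega => exact .omega _ _

theorem typings_subset_of_step {X Y : DB} (h : Step X Y) : typings Y ⊆ typings X := by
  induction h with
  | beta A B =>
    rintro ⟨Γ, T⟩ h
    obtain ⟨C, hB, hA⟩ := HasType.of_subst0 h
    exact hA.lam.app hB
  | appL B _ ih => exact typings_app_subset ih subset_rfl
  | appR A _ ih => exact typings_app_subset subset_rfl ih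
  | abs _ ih => exact typings_lam_subset ih

theorem typings_subset_of_red {X Y : DB} (h : ReflTransGen Step X Y) : typings Y ⊆ typings X := by
  induction h with
  | refl => exact subset_rfl
  | tail _ hstep ih => exact (typings_subset_of_step hstep).trans ih

structure Saturated (S : Set DB) : Prop where
  apps_var_mem (i : ℕ) (l : List DB) : (var i).apps l ∈ S
  apps_beta_mem (A B : DB) (l : List DB) : (subst0 A B).apps l ∈ S → (app (lam A) B).apps l ∈ S

def Ty.interp : Ty → Set DB
  | base => {M | HeadNormalizing M}
  | arr A B => {M | ∀ N ∈ A.interp, app M N ∈ B.interp}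
  | inter A B => A.interp ∩ B.interp
  | omega => Set.univ

theorem saturated_base : Saturated {M | HeadNormalizing M} where
  apps_var_mem i l :=
    .of_normal (not_headStep_apps (fun _ h => by cases h) (fun _ h => by cases h) l)
  apps_beta_mem A B l h := .head ((HeadStep.beta A B).apps (fun _ h => nomatch h) l) h

theorem Ty.saturated_interp (A : Ty) : Saturated A.interp := by
  induction A with
  | base => exact saturated_base
  | arr A B _ ihB =>
    refine ⟨fun i l N _ => ?_, fun A' B' l h N hN => ?_⟩
    · simpa [apps_append, apps] using ihB.apps_var_mem i (l ++ [N])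
    · simpa [apps_append, apps] using ihB.apps_beta_mem A' B' (l ++ [N]) (by
        simpa [apps_append, apps] using h N hN)
  | inter A B ihA ihB =>
    exact ⟨fun i l => ⟨ihA.apps_var_mem i l, ihB.apps_var_mem i l⟩,
      fun A' B' l h => ⟨ihA.apps_beta_mem A' B' l h.1, ihB.apps_beta_mem A' B' l h.2⟩⟩
  | omega => exact ⟨fun _ _ => trivial, fun _ _ _ _ => trivial⟩

theorem HasType.subst_mem_interp {Γ : Ctx} {M : DB} {A : Ty} (h : HasType Γ M A)
    (σ : ℕ → DB) (hσ : ∀ i, σ i ∈ (Γ i).interp) : M.subst σ ∈ A.interp := by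
  induction h generalizing σ with
  | var => exact hσ _
  | @lam Γ M S B _ ih =>
    intro N hN
    have hMN : M.subst (cons N σ) ∈ B.interp := ih _ fun i => by
      cases i with
      | zero => exact hN
      | succ j => exact hσ j
    rw [← subst0_subst_ups] at hMN
    exact (B.saturated_interp).apps_beta_mem _ _ [] hMN
  | app _ _ ih ih' => exact ih σ hσ _ (ih' σ hσ)
  | inter _ _ ih ih' => exact ⟨ih σ hσ, ih' σ hσ⟩
  | fst _ ih => exact (ih σ hσ).1
  | snd _ ih => exact (ih σ hσ).2
  | omega => trivial

theorem HasType.headNormalizing {Γ : Ctx} {X : DB} (h : HasType Γ X (arr base base)) :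
    HeadNormalizing X := by
  have hX : X ∈ (arr base base).interp := by
    simpa using h.subst_mem_interp DB.var fun i => (Γ i).saturated_interp.apps_var_mem i []
  exact HeadNormalizing.of_app (hX _ (saturated_base.apps_var_mem 0 []))

theorem headNormalizing_of_red_id {X : DB} (h : ReflTransGen Step X (lam (var 0))) :
    HeadNormalizing X :=
  HasType.headNormalizing
    (@typings_subset_of_red _ _ h (fun _ => base, _) (HasType.lam (HasType.var _ 0)))

end DB

namespace Tm

def toDB (ρ : ℕ → ℕ) : Tm → DB
  | var x => .var (ρ x)
  | lam x t => .lam (toDB (fun z => if z = x then 0 else ρ z + 1) t)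
  | app t u => .app (toDB ρ t) (toDB ρ u)

theorem fresh_not_mem (s : Finset ℕ) : fresh s ∉ s := fun h => by
  have : s.sup id + 1 ≤ s.sup id := Finset.le_sup (f := id) h
  omega

theorem toDB_eq_rename {t : Tm} {ρ ρ' π : ℕ → ℕ} (h : ∀ z ∈ t.fv, ρ' z = π (ρ z)) :
    toDB ρ' t = (toDB ρ t).rename π := by
  induction t generalizing ρ ρ' π with
  | var x => simp [toDB, DB.rename, h x (by simp [fv])]
  | lam x t ih =>
    refine congrArg DB.lam (ih fun z hz => ?_)
    by_cases hzx : z = x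
    · simp [hzx, DB.upr]
    · simp [hzx, DB.upr, h z (by simp [fv, hzx, hz])]
  | app t u iht ihu =>
    simp only [toDB, DB.rename]
    rw [iht fun z hz => h z (by simp [fv, hz]), ihu fun z hz => h z (by simp [fv, hz])]

theorem toDB_subst {t : Tm} {σ : ℕ → Tm} {ρ ρ' : ℕ → ℕ} {τ : ℕ → DB}
    (h : ∀ z ∈ t.fv, τ (ρ' z) = toDB ρ (σ z)) :
    toDB ρ (subst σ t) = (toDB ρ' t).subst τ := by
  induction t generalizing σ ρ ρ' τ with
  | var x => exact (h x (by simp [fv])).symm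
  | app t u iht ihu =>
    simp only [subst, toDB, DB.subst]
    rw [iht fun z hz => h z (by simp [fv, hz]), ihu fun z hz => h z (by simp [fv, hz])]
  | lam x t ih =>
    refine congrArg DB.lam (ih fun z hz => ?_)
    by_cases hzx : z = x
    · simp [hzx, toDB, DB.ups]
    · simp only [hzx, if_false, DB.ups]
      rw [h z (by simp [fv, hzx, hz])]
      refine (toDB_eq_rename fun w hw => ?_).symm
      have hfresh : fresh ((fv t \ {x}).biUnion fun w => fv (σ w)) ≠ w := by
        rintro rfl
        exact fresh_not_mem _ (Finset.mem_biUnion.2 ⟨z, by simp [hz, hzx], hw⟩)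
      simp [hfresh.symm]

theorem toDB_subst1 (ρ : ℕ → ℕ) (x : ℕ) (N M : Tm) :
    toDB ρ (subst1 x N M) =
      DB.subst0 (toDB (fun z => if z = x then 0 else ρ z + 1) M) (toDB ρ N) := by
  refine toDB_subst fun z _ => ?_
  by_cases hzx : z = x <;> simp [hzx, DB.cons, toDB]

theorem toDB_apps (ρ : ℕ → ℕ) (t : Tm) (l : List Tm) :
    toDB ρ (apps t l) = (toDB ρ t).apps (l.map (toDB ρ)) := by
  induction l generalizing t with
  | nil => rfl
  | cons a l ih => exact ih (app t a)

theorem Step.toDB {M N : Tm} (h : Step M N) (ρ : ℕ → ℕ) : DB.Step (toDB ρ M) (toDB ρ N) := by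
  induction h generalizing ρ with
  | beta x M N => rw [toDB_subst1]; exact .beta _ _
  | appL N _ ih => exact .appL _ (ih ρ)
  | appR M _ ih => exact .appR _ (ih ρ)
  | abs x _ ih => exact .abs (ih _)

theorem HeadStep.toDB {M N : Tm} (h : HeadStep M N) (ρ : ℕ → ℕ) :
    DB.HeadStep (toDB ρ M) (toDB ρ N) := by
  induction h generalizing ρ with
  | beta x M N Ms =>
    rw [toDB_apps, toDB_apps, toDB_subst1]
    exact (DB.HeadStep.beta _ _).apps (fun _ h => by cases h) _
  | abs x _ ih => exact .abs (ih _)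

theorem weaklyNormalizing_of_headNormalizing_toDB {M : Tm} {ρ : ℕ → ℕ}
    (h : (toDB ρ M).HeadNormalizing) : WeaklyNormalizing HeadStep M :=
  .of_map DB.HeadStep.rightUnique (toDB ρ) (fun _ _ hs => hs.toDB ρ) h

theorem exists_headNormalizing_toDB_of_lams {xs : List ℕ} {ρ : ℕ → ℕ} {M : Tm}
    (h : (toDB ρ (lams xs M)).HeadNormalizing) : ∃ ρ', (toDB ρ' M).HeadNormalizing := by
  induction xs generalizing ρ with
  | nil => exact ⟨ρ, h⟩
  | cons x xs ih => exact ih (DB.headNormalizing_lam_iff.1 h)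

theorem Solvable.weaklyNormalizing {M : Tm} (h : Solvable M) : WeaklyNormalizing HeadStep M := by
  obtain ⟨xs, Ns, y, -, hred⟩ := h
  have hDB : ReflTransGen DB.Step (toDB id (apps (lams xs M) Ns)) (toDB id (lam y (var y))) :=
    hred.lift (toDB id) fun _ _ hs => hs.toDB id
  have hHN := DB.headNormalizing_of_red_id (by simpa [toDB] using hDB)
  rw [toDB_apps] at hHN
  obtain ⟨ρ, hM⟩ := exists_headNormalizing_toDB_of_lams hHN.of_apps
  exact weaklyNormalizing_of_headNormalizing_toDB hM

theorem apps_append (t : Tm) (l l' : List Tm) : apps t (l ++ l') = apps (apps t l) l' := by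
  simp [apps]

theorem lams_append (xs ys : List ℕ) (t : Tm) : lams (xs ++ ys) t = lams xs (lams ys t) := by
  simp [lams]

theorem subst_apps (σ : ℕ → Tm) (t : Tm) (l : List Tm) :
    subst σ (apps t l) = apps (subst σ t) (l.map (subst σ)) := by
  induction l generalizing t with
  | nil => rfl
  | cons a l ih => exact ih (app t a)

theorem Step.apps {M N : Tm} (h : Step M N) (l : List Tm) : Step (apps M l) (apps N l) := by
  induction l generalizing M N with
  | nil => exact h
  | cons a l ih => exact ih (.appL a h)

theorem HeadStep.step {M N : Tm} (h : HeadStep M N) : Step M N := by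
  induction h with
  | beta x M N Ms => exact (Step.beta x M N).apps Ms
  | abs x _ ih => exact .abs x ih

theorem Red.apps {M N : Tm} (h : Red M N) (l : List Tm) : Red (apps M l) (apps N l) :=
  h.lift (Tm.apps · l) fun _ _ hs => hs.apps l

theorem Red.lams {M N : Tm} (h : Red M N) (xs : List ℕ) : Red (lams xs M) (lams xs N) := by
  induction xs with
  | nil => exact h
  | cons x xs ih => exact ih.lift (lam x) fun _ _ => .abs x

theorem HeadStep.exists_app {A A' : Tm} (h : HeadStep A A') (B : Tm) :
    ∃ P, HeadStep (app A B) P := by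
  cases h with
  | beta x M N Ms =>
    exact ⟨_, by simpa [apps_append, Tm.apps] using HeadStep.beta x M N (Ms ++ [B])⟩
  | abs x => exact ⟨_, .beta x _ B []⟩

theorem exists_eq_lams_apps_var {N : Tm} (h : ∀ P, ¬ HeadStep N P) :
    ∃ (zs : List ℕ) (v : ℕ) (Ps : List Tm), N = lams zs (apps (var v) Ps) := by
  induction N with
  | var x => exact ⟨[], x, [], rfl⟩
  | lam x T ih =>
    obtain ⟨zs, v, Ps, rfl⟩ := ih fun P hP => h _ (.abs x hP)
    exact ⟨x :: zs, v, Ps, rfl⟩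
  | app A B ihA =>
    obtain ⟨zs, v, Ps, rfl⟩ := ihA fun P hP => by
      obtain ⟨Q, hQ⟩ := hP.exists_app B
      exact h Q hQ
    cases zs with
    | nil => exact ⟨[], v, Ps ++ [B], by simp [lams, Tm.apps]⟩
    | cons z zs => exact absurd (HeadStep.beta z _ B []) (h _)

/-- All binders are `1 = fresh ∅`, so substitution leaves this closed term syntactically
unchanged. -/
def discard (m : ℕ) : Tm := lams (List.replicate m 1) (lam 1 (var 1))

theorem discard_succ (m : ℕ) : discard (m + 1) = lam 1 (discard m) := rfl

theorem fv_discard (m : ℕ) : fv (discard m) = ∅ := by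
  induction m with
  | zero => simp [discard, lams, fv]
  | succ m ih => simp [discard_succ, fv, ih]

theorem subst_discard (σ : ℕ → Tm) (m : ℕ) : subst σ (discard m) = discard m := by
  induction m generalizing σ with
  | zero => simp [discard, lams, subst, fv, fresh]
  | succ m ih => simp [discard_succ, subst, fv_discard, fresh, ih]

theorem red_apps_discard {m : ℕ} {Qs : List Tm} (hQs : Qs.length = m) :
    Red (apps (discard m) Qs) (lam 1 (var 1)) := by
  induction Qs generalizing m with
  | nil => subst hQs; exact .refl
  | cons Q Qs ih =>
    subst hQs
    refine .head ((Step.beta 1 (discard Qs.length) Q).apps Qs) ?_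
    rw [subst1, subst_discard]
    exact ih rfl

theorem exists_subst_lams (σ : ℕ → Tm) (ws : List ℕ) (t : Tm) :
    ∃ (ws' : List ℕ) (σ' : ℕ → Tm), ws'.length = ws.length ∧ (∀ z ∉ ws, σ' z = σ z) ∧
      (∀ z ∈ ws, ∃ v ∈ ws', σ' z = var v) ∧ subst σ (lams ws t) = lams ws' (subst σ' t) := by
  induction ws generalizing σ with
  | nil => exact ⟨[], σ, rfl, fun _ _ => rfl, by simp, rfl⟩
  | cons w ws ih =>
    set y := fresh ((fv (lams ws t) \ {w}).biUnion fun z => fv (σ z))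
    obtain ⟨ws', σ', hlen, hout, hin, heq⟩ := ih fun z => if z = w then var y else σ z
    refine ⟨y :: ws', σ', by simp [hlen], fun z hz => ?_, fun z hz => ?_, ?_⟩
    · rw [List.mem_cons, not_or] at hz
      simp [hout z hz.2, hz.1]
    · by_cases hzws : z ∈ ws
      · obtain ⟨v, hv, hσ'⟩ := hin z hzws
        exact ⟨v, List.mem_cons_of_mem _ hv, hσ'⟩
      · have hzw : z = w := by simpa [hzws] using hz
        subst hzw
        exact ⟨y, List.mem_cons_self, by simp [hout z hzws]⟩
    · exact congrArg (lam y) heq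

theorem red_apps_lams_replicate_discard {m : ℕ} (ws : List ℕ) {H : Tm} {Qs : List Tm}
    (hQs : Qs.length = m) (hH : H = discard m ∨ ∃ v ∈ ws, H = var v) :
    Red (apps (lams ws (apps H Qs)) (List.replicate ws.length (discard m))) (lam 1 (var 1)) := by
  generalize hn : ws.length = n
  induction n generalizing ws H Qs with
  | zero =>
    obtain rfl := List.length_eq_zero_iff.1 hn
    obtain rfl : H = discard m := by simpa using hH
    exact red_apps_discard hQs
  | succ n ih =>
    obtain ⟨w, ws, rfl⟩ : ∃ w ws', ws = w :: ws' := List.exists_cons_of_length_eq_add_one hn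
    obtain ⟨ws', σ', hlen, hout, hin, heq⟩ :=
      exists_subst_lams (fun z => if z = w then discard m else var z) ws (apps H Qs)
    rw [subst_apps] at heq
    have hstep : Step (app (lams (w :: ws) (apps H Qs)) (discard m))
        (lams ws' (apps (subst σ' H) (Qs.map (subst σ')))) := heq ▸ Step.beta w _ _
    have hH' : subst σ' H = discard m ∨ ∃ v ∈ ws', subst σ' H = var v := by
      obtain rfl | ⟨v, hv, rfl⟩ := hH
      · exact .inl (subst_discard _ _)
      · by_cases hvws : v ∈ ws
        · exact .inr (hin v hvws)
        · have hvw : v = w := by simpa [hvws] using hv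
          subst hvw
          exact .inl (by simp [subst, hout v hvws])
    rw [List.replicate_succ]
    exact .head (hstep.apps _) (ih ws' (by simpa using hQs) hH' (by simp_all))

theorem solvable_of_weaklyNormalizing {M : Tm} (h : WeaklyNormalizing HeadStep M) :
    Solvable M := by
  obtain ⟨N, hMN, hN⟩ := h
  obtain ⟨zs, v, Ps, rfl⟩ := exists_eq_lams_apps_var hN
  set xs := (insert v M.fv).toList
  refine ⟨xs, List.replicate (xs ++ zs).length (discard Ps.length), 1,
    fun z hz => by simp [xs, hz], ?_⟩
  have hred : Red (lams xs M) (lams (xs ++ zs) (apps (var v) Ps)) := by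
    rw [lams_append]
    exact (show Red _ _ from hMN.lift id fun _ _ => HeadStep.step).lams xs
  exact (hred.apps _).trans (red_apps_lams_replicate_discard _ rfl (.inr ⟨v, by simp [xs], rfl⟩))

end Tm

/-- A λ-term `M` is solvable iff its head reduction is finite,
i.e. head reduction starting from `M` terminates in a term with no head
redex (a head normal form). -/
theorem solvable_iff_head_reduction_terminates (M : Tm) :
    Tm.Solvable M ↔
      ∃ N : Tm, Relation.ReflTransGen Tm.HeadStep M N ∧
        ∀ P : Tm, ¬ Tm.HeadStep N P :=
  ⟨Tm.Solvable.weaklyNormalizing, Tm.solvable_of_weaklyNormalizing⟩
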